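/- Unbiasedness of the RS+FD[OUE-r] estimator (Theorem 'est_oue_r'): let d ≥ 1 and c ≥ 2 be integers, p, q ∈ [0,1] with p ≠ q, and let n be a positive integer. Suppose that among the n users exactly f·n hold the value v (where 0 ≤ f ≤ 1 and f·n is an integer) and each user independently reports the bit corresponding to v as 1 with probability p/d + ((d−1)/d)·(p/c + (c−1)·q/c) if it holds v and with probability q/d + ((d−1)/d)·(p/c + (c−1)·q/c) otherwise. Then the estimator f̂ = (N·d·c − n·(q·c + (p−q)·(d−1) + q·c·(d−1)))/(n·c·(p−q)), where N is the number of users reporting bit 1 for v, satisfies E[f̂] = f. -/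

import Mathlib

/-!
By linearity of expectation, the expected number of users reporting bit 1 for `v` is
`n·B + f·n·(A - B)`, where `A` and `B` are the reporting probabilities of holders and
non-holders. Since `A - B = (p - q)/d` and
`n·B·d·c = n·(q·c + (p - q)·(d - 1) + q·c·(d - 1))`, the affine estimator has mean `f`.
-/

open MeasureTheory ProbabilityTheory

lemma ite_one_zero_eq_indicator {Ω : Type*} (X : Ω → Bool) :
    (fun ω => if X ω then (1 : ℝ) else 0) = {ω | X ω = true}.indicator (fun _ => 1) := by
  funext ω
  by_cases h : X ω <;> simp [h]

section BoolIndicator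

variable {Ω : Type*} [MeasurableSpace Ω] {μ : Measure Ω}

lemma measurableSet_eq_true {X : Ω → Bool} (hX : Measurable X) :
    MeasurableSet {ω | X ω = true} :=
  hX (measurableSet_singleton true)

lemma integral_ite_one_zero {X : Ω → Bool} (hX : Measurable X) :
    ∫ ω, (if X ω then (1 : ℝ) else 0) ∂μ = μ.real {ω | X ω = true} := by
  rw [ite_one_zero_eq_indicator, integral_indicator_const _ (measurableSet_eq_true hX),
    smul_eq_mul, mul_one]

lemma integrable_ite_one_zero [IsFiniteMeasure μ] {X : Ω → Bool} (hX : Measurable X) :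
    Integrable (fun ω => if X ω then (1 : ℝ) else 0) μ := by
  rw [ite_one_zero_eq_indicator]
  exact (integrable_const 1).indicator (measurableSet_eq_true hX)

lemma integral_sum_ite_one_zero [IsFiniteMeasure μ] {ι : Type*} [Fintype ι] {X : ι → Ω → Bool}
    (hX : ∀ i, Measurable (X i)) :
    ∫ ω, (∑ i, if X i ω then (1 : ℝ) else 0) ∂μ = ∑ i, μ.real {ω | X i ω = true} := by
  rw [integral_finsetSum _ fun i _ => integrable_ite_one_zero (hX i)]
  exact Finset.sum_congr rfl fun i _ => integral_ite_one_zero (hX i)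

lemma integral_sub_const_div [IsProbabilityMeasure μ] {g : Ω → ℝ} (hg : Integrable g μ)
    (b e : ℝ) : ∫ ω, (g ω - b) / e ∂μ = ((∫ ω, g ω ∂μ) - b) / e := by
  rw [integral_div, integral_sub hg (integrable_const b), integral_const, probReal_univ,
    one_smul]

end BoolIndicator

lemma Fintype.sum_ite_eq_card_mul_add {ι : Type*} [Fintype ι] (h : ι → Bool) (a b : ℝ) :
    ∑ i, (if h i then a else b)
      = Fintype.card ι * b + (∑ i, if h i then (1 : ℝ) else 0) * (a - b) := by
  rw [Finset.sum_mul, ← Finset.card_univ, ← nsmul_eq_mul, ← Finset.sum_const,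
    ← Finset.sum_add_distrib]
  refine Finset.sum_congr rfl fun i _ => ?_
  cases h i <;> simp

lemma fakeValue_prob_nonneg {d c : ℕ} (hd : 1 ≤ d) (hc : 1 ≤ c) {p q : ℝ} (hp : 0 ≤ p)
    (hq : 0 ≤ q) :
    0 ≤ (((d : ℝ) - 1) / d) * (p / c + ((c : ℝ) - 1) * q / c) := by
  have hd' : (1 : ℝ) ≤ d := by exact_mod_cast hd
  have hc' : (1 : ℝ) ≤ c := by exact_mod_cast hc
  have hcq : 0 ≤ ((c : ℝ) - 1) * q := mul_nonneg (by linarith) hq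
  positivity

lemma oue_r_estimator_of_mean {d c n : ℕ} (hd : d ≠ 0) (hc : c ≠ 0) (hn : n ≠ 0) {p q : ℝ}
    (hpq : p ≠ q) (f : ℝ) :
    let r := (((d : ℝ) - 1) / d) * (p / c + ((c : ℝ) - 1) * q / c)
    let A := p / d + r
    let B := q / d + r
    ((n * B + f * n * (A - B)) * d * c
        - n * (q * c + (p - q) * ((d : ℝ) - 1) + q * c * ((d : ℝ) - 1))) / (n * c * (p - q)) = f := by
  have hpq' : p - q ≠ 0 := sub_ne_zero.mpr hpq
  intro r A B
  simp only [A, B, r]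
  field_simp
  ring

theorem est_oue_r_general
    {Ω : Type*} [MeasureSpace Ω] [IsProbabilityMeasure (ℙ : Measure Ω)]
    (d c : ℕ) (hd : 1 ≤ d) (hc : 2 ≤ c)
    (p q : ℝ) (hp : 0 ≤ p ∧ p ≤ 1) (hq : 0 ≤ q ∧ q ≤ 1) (hpq : p ≠ q)
    (n : ℕ) (hn : 0 < n)
    (f : ℝ)
    (holds : Fin n → Bool)
    (hcount : (∑ i, if holds i then (1 : ℝ) else 0) = f * n)
    (report : Fin n → Ω → Bool)
    (hmeas : ∀ i, Measurable (report i))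
    (hps : ∀ i, holds i = true →
      ℙ {ω | report i ω = true}
        = ENNReal.ofReal (p / (d : ℝ)
            + (((d : ℝ) - 1) / (d : ℝ)) * (p / (c : ℝ) + ((c : ℝ) - 1) * q / (c : ℝ))))
    (hqs : ∀ i, holds i = false →
      ℙ {ω | report i ω = true}
        = ENNReal.ofReal (q / (d : ℝ)
            + (((d : ℝ) - 1) / (d : ℝ)) * (p / (c : ℝ) + ((c : ℝ) - 1) * q / (c : ℝ)))) :
    ∫ ω, ((∑ i, if report i ω then (1 : ℝ) else 0) * (d : ℝ) * (c : ℝ)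
        - (n : ℝ) * (q * (c : ℝ) + (p - q) * ((d : ℝ) - 1) + q * (c : ℝ) * ((d : ℝ) - 1)))
        / ((n : ℝ) * (c : ℝ) * (p - q)) ∂ℙ = f := by
  set r := (((d : ℝ) - 1) / d) * (p / c + ((c : ℝ) - 1) * q / c)
  have hr : 0 ≤ r := fakeValue_prob_nonneg hd (by omega) hp.1 hq.1
  have hprob : ∀ i, (ℙ : Measure Ω).real {ω | report i ω = true}
      = if holds i then p / d + r else q / d + r := by
    intro i
    cases h : holds i
    · rw [measureReal_def, hqs i h, if_neg (by simp),
        ENNReal.toReal_ofReal (by have := hq.1; positivity)]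
    · rw [measureReal_def, hps i h, if_pos rfl,
        ENNReal.toReal_ofReal (by have := hp.1; positivity)]
  have hmean : ∫ ω, (∑ i, if report i ω then (1 : ℝ) else 0) ∂ℙ
      = n * (q / d + r) + f * n * ((p / d + r) - (q / d + r)) := by
    rw [integral_sum_ite_one_zero hmeas, Finset.sum_congr rfl fun i _ => hprob i,
      Fintype.sum_ite_eq_card_mul_add, Fintype.card_fin, hcount]
  rw [integral_sub_const_div (((integrable_finsetSum _ fun i _ =>
      integrable_ite_one_zero (hmeas i)).mul_const _).mul_const _),
    integral_mul_const, integral_mul_const, hmean]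
  exact oue_r_estimator_of_mean (by omega) (by omega) (by omega) hpq f

/-- Unbiasedness of the RS+FD[OUE-r] estimator (Theorem `est_oue_r`). -/
theorem est_oue_r
    {Ω : Type*} [MeasureSpace Ω] [IsProbabilityMeasure (ℙ : Measure Ω)]
    (d c : ℕ) (hd : 1 ≤ d) (hc : 2 ≤ c)
    (p q : ℝ) (hp : 0 ≤ p ∧ p ≤ 1) (hq : 0 ≤ q ∧ q ≤ 1) (hpq : p ≠ q)
    (n : ℕ) (hn : 0 < n)
    (f : ℝ) (hf0 : 0 ≤ f) (hf1 : f ≤ 1)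
    (holds : Fin n → Bool)
    (hcount : (∑ i, if holds i then (1 : ℝ) else 0) = f * n)
    (report : Fin n → Ω → Bool)
    (hmeas : ∀ i, Measurable (report i))
    (hindep : iIndepFun report ℙ)
    (hps : ∀ i, holds i = true →
      ℙ {ω | report i ω = true}
        = ENNReal.ofReal (p / (d : ℝ)
            + (((d : ℝ) - 1) / (d : ℝ)) * (p / (c : ℝ) + ((c : ℝ) - 1) * q / (c : ℝ))))
    (hqs : ∀ i, holds i = false →
      ℙ {ω | report i ω = true}
        = ENNReal.ofReal (q / (d : ℝ)
            + (((d : ℝ) - 1) / (d : ℝ)) * (p / (c : ℝ) + ((c : ℝ) - 1) * q / (c : ℝ)))) :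
    ∫ ω, ((∑ i, if report i ω then (1 : ℝ) else 0) * (d : ℝ) * (c : ℝ)
        - (n : ℝ) * (q * (c : ℝ) + (p - q) * ((d : ℝ) - 1) + q * (c : ℝ) * ((d : ℝ) - 1)))
        / ((n : ℝ) * (c : ℝ) * (p - q)) ∂ℙ = f :=
  est_oue_r_general d c hd hc p q hp hq hpq n hn f holds hcount report hmeas hps hqs
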